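/- arXiv:1703.03124 — 2 statements merged into one kernel-verified Lean document; each statement's English description precedes it below -/
import Mathlib

section
/- Suppose X ∈ H²(𝕋; ℝ²) satisfies the well-stretched condition with constant λ > 0. Then for s' ≠ s the integrand Γ₀(s,s') = -∂_{s'}[G(X(s)-X(s'))]·(X'(s')-X'(s)), where G is the 2D Stokeslet, satisfies the pointwise bound |Γ₀(s,s')| ≤ (C/λ)·|M(s,s')|·|X'(s')| for a universal constant C, where M(s,s') = (X'(s')-X'(s))/(s'-s). -/
open MeasureTheory Set

/-- The integrand Γ₀(s,s') = -∂_{s'}[G(X(s)-X(s'))](X'(s')-X'(s)) of the boundary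
velocity, written out explicitly via the 2D Stokeslet G; here the plane ℝ² is
identified with ℂ, and s' = s + τ. -/
noncomputable def Gamma0 (X X' : ℝ → ℂ) (s τ : ℝ) : ℂ :=
  (4 * Real.pi)⁻¹ •
    ((((starRingEnd ℂ (X (s + τ) - X s) * X' (s + τ)).re / ‖X (s + τ) - X s‖ ^ 2) •
        (X' (s + τ) - X' s)
      - ((starRingEnd ℂ (X (s + τ) - X s) * (X' (s + τ) - X' s)).re / ‖X (s + τ) - X s‖ ^ 2) •
        X' (s + τ)
      - ((starRingEnd ℂ (X' (s + τ)) * (X' (s + τ) - X' s)).re / ‖X (s + τ) - X s‖ ^ 2) •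
        (X (s + τ) - X s))
      + ((2 * (starRingEnd ℂ (X (s + τ) - X s) * X' (s + τ)).re *
            (starRingEnd ℂ (X (s + τ) - X s) * (X' (s + τ) - X' s)).re) /
          ‖X (s + τ) - X s‖ ^ 4) • (X (s + τ) - X s))

/-!
Writing `L`, `M` for the difference quotients of `X`, `X'` and `V = X'(s')`, `4πΓ₀` is
`K(L, V, M) := gamma0Kernel L V M`, which is homogeneous of degree `-1` in `L` and linear in `M`. Hence
`K(L, V, M) = ‖L‖⁻¹ K(L/‖L‖, V, M)`, and at a unit vector Cauchy–Schwarz bounds the four terms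
by `‖V‖‖M‖`, `‖V‖‖M‖`, `‖V‖‖M‖`, `2‖V‖‖M‖`. Well-stretchedness gives `‖L‖ ≥ λ`, so `C = 5/(4π)`.
-/

open scoped RealInnerProductSpace

section Kernel

variable {E : Type*} [NormedAddCommGroup E] [InnerProductSpace ℝ E]

noncomputable def gamma0Kernel (L V M : E) : E :=
  (⟪L, V⟫ / ‖L‖ ^ 2) • M - (⟪L, M⟫ / ‖L‖ ^ 2) • V - (⟪V, M⟫ / ‖L‖ ^ 2) • L
    + (2 * ⟪L, V⟫ * ⟪L, M⟫ / ‖L‖ ^ 4) • L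

theorem gamma0Kernel_smul_left (c : ℝ) (L V M : E) :
    gamma0Kernel (c • L) V M = c⁻¹ • gamma0Kernel L V M := by
  rcases eq_or_ne c 0 with rfl | hc
  · simp [gamma0Kernel]
  rcases eq_or_ne L 0 with rfl | hL
  · simp [gamma0Kernel]
  have hL' : ‖L‖ ≠ 0 := norm_ne_zero_iff.mpr hL
  simp only [gamma0Kernel, inner_smul_left, norm_smul, Real.norm_eq_abs,
    mul_pow, sq_abs, (by decide : Even 4).pow_abs, smul_add, smul_sub, smul_smul, RCLike.conj_to_real]
  match_scalars <;> field_simp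

theorem gamma0Kernel_smul_right (c : ℝ) (L V M : E) :
    gamma0Kernel L V (c • M) = c • gamma0Kernel L V M := by
  simp only [gamma0Kernel, inner_smul_right, smul_add, smul_sub, smul_smul]
  match_scalars <;> ring

theorem norm_gamma0Kernel_le_of_norm_eq_one {u : E} (hu : ‖u‖ = 1) (V M : E) :
    ‖gamma0Kernel u V M‖ ≤ 5 * (‖V‖ * ‖M‖) := by
  have huV : |⟪u, V⟫| ≤ ‖V‖ := by simpa [hu] using abs_real_inner_le_norm u V
  have huM : |⟪u, M⟫| ≤ ‖M‖ := by simpa [hu] using abs_real_inner_le_norm u M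
  have hVM : |⟪V, M⟫| ≤ ‖V‖ * ‖M‖ := abs_real_inner_le_norm V M
  simp only [gamma0Kernel, hu, one_pow, div_one]
  refine (norm_add_le _ _).trans (add_le_add ((norm_sub_le _ _).trans
    (add_le_add (norm_sub_le _ _) le_rfl)) le_rfl) |>.trans ?_
  simp only [norm_smul, Real.norm_eq_abs, hu, abs_mul, abs_two, mul_one]
  nlinarith [norm_nonneg V, norm_nonneg M, abs_nonneg ⟪u, V⟫, abs_nonneg ⟪u, M⟫,
    mul_le_mul huV huM (abs_nonneg _) (norm_nonneg _)]

theorem norm_gamma0Kernel_le (L V M : E) : ‖gamma0Kernel L V M‖ ≤ 5 * (‖V‖ * ‖M‖) / ‖L‖ := by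
  rcases eq_or_ne L 0 with rfl | hL
  · simp [gamma0Kernel]
  have hL' : 0 < ‖L‖ := norm_pos_iff.mpr hL
  have hunit : ‖‖L‖⁻¹ • L‖ = 1 := norm_smul_inv_norm hL
  have hscale : gamma0Kernel L V M = ‖L‖⁻¹ • gamma0Kernel (‖L‖⁻¹ • L) V M := by
    rw [gamma0Kernel_smul_left, inv_inv, smul_smul, inv_mul_cancel₀ hL'.ne', one_smul]
  rw [hscale, norm_smul, Real.norm_eq_abs, abs_inv, abs_norm, inv_mul_eq_div]
  gcongr
  exact norm_gamma0Kernel_le_of_norm_eq_one hunit V M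

end Kernel

theorem Gamma0_eq_gamma0Kernel (X X' : ℝ → ℂ) (s τ : ℝ) (hτ : τ ≠ 0) :
    Gamma0 X X' s τ = (4 * Real.pi)⁻¹ •
      gamma0Kernel (τ⁻¹ • (X (s + τ) - X s)) (X' (s + τ)) (τ⁻¹ • (X' (s + τ) - X' s)) := by
  rw [gamma0Kernel_smul_left, gamma0Kernel_smul_right, inv_inv, smul_smul τ, mul_inv_cancel₀ hτ,
    one_smul]
  simp only [Gamma0, gamma0Kernel, Complex.inner, mul_comm (starRingEnd ℂ _)]

/-- Pointwise bound |Γ₀(s,s')| ≤ (C/λ)|M(s,s')||X'(s')| under the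
well-stretched condition. -/
theorem gamma0_pointwise_bound :
    ∃ C : ℝ, 0 < C ∧
      ∀ (X X' X'' : ℝ → ℂ) (lam : ℝ), 0 < lam →
        Function.Periodic X (2 * Real.pi) →
        (∀ t, HasDerivAt X (X' t) t) →
        (∀ t, HasDerivAt X' (X'' t) t) →
        IntegrableOn (fun t => ‖X'' t‖ ^ 2) (Icc 0 (2 * Real.pi)) →
        (∀ s₁ s₂ : ℝ, |s₁ - s₂| ≤ Real.pi → lam * |s₁ - s₂| ≤ ‖X s₁ - X s₂‖) →
        ∀ (s τ : ℝ), τ ≠ 0 → |τ| ≤ Real.pi →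
          ‖Gamma0 X X' s τ‖ ≤ C / lam * ‖τ⁻¹ • (X' (s + τ) - X' s)‖ * ‖X' (s + τ)‖ := by
  refine ⟨5 / (4 * Real.pi), by positivity, ?_⟩
  intro X X' X'' lam hlam _ _ _ _ hstretch s τ hτ hτπ
  set L := τ⁻¹ • (X (s + τ) - X s)
  set M := τ⁻¹ • (X' (s + τ) - X' s)
  have hL : lam ≤ ‖L‖ := by
    have hD := hstretch (s + τ) s (by simpa using hτπ)
    rw [add_sub_cancel_left] at hD
    rwa [norm_smul, norm_inv, Real.norm_eq_abs, inv_mul_eq_div, le_div_iff₀ (abs_pos.mpr hτ)]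
  rw [Gamma0_eq_gamma0Kernel X X' s τ hτ, norm_smul, Real.norm_of_nonneg (by positivity)]
  calc (4 * Real.pi)⁻¹ * ‖gamma0Kernel L (X' (s + τ)) M‖
      ≤ (4 * Real.pi)⁻¹ * (5 * (‖X' (s + τ)‖ * ‖M‖) / ‖L‖) := by
        gcongr; exact norm_gamma0Kernel_le _ _ _
    _ ≤ (4 * Real.pi)⁻¹ * (5 * (‖X' (s + τ)‖ * ‖M‖) / lam) := by gcongr
    _ = 5 / (4 * Real.pi) / lam * ‖M‖ * ‖X' (s + τ)‖ := by ring
end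

section
/- Let D(s) = Σ_k D̂_k e^{iks} ∈ H¹(𝕋;ℝ²) (so D̂_{-k} = conj(D̂_k)) satisfy the two constraints Im D̂_{1,1} + Re D̂_{1,2} = 0 and |Re D̂_{1,1} − Im D̂_{1,2}| ≤ δ, and define the linear operator T D(s) = −(1/4)J·(ℋD)(s) − (1/4)(ℋD')(s) where J = [[0,1],[−1,0]] and ℋ is the Hilbert transform on 𝕋. Then ‖TD‖²_{L²(𝕋)} ≥ (1/64)‖D'‖²_{L²(𝕋)} − Cδ² for a universal constant C. -/
/-!
On mode `k` the symbol of `T` is `-1/4` times the Hermitian matrix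
`[[|k|, -i sgn k], [i sgn k, |k|]]`, whose eigenvalues are `|k| ± 1`. Hence
`‖T̂_k‖² ≥ (|k| - 1)² |D̂_k|² / 16 ≥ k² |D̂_k|² / 64` once `|k| ≥ 2`, while `k = 0` contributes to
neither side. At `k = ±1` the symbol has a kernel; the optimality constraint removes one real
direction of it and the near-area-conservation constraint bounds the other by `δ`. The mode `-1`
is the complex conjugate of the mode `1`, so it costs the same.
-/

open Complex

/-- The squared norm of the `k`-th Fourier coefficient of `T D` when `D̂_k = (u, v)`. -/
noncomputable def modeNormSq (k : ℤ) (u v : ℂ) : ℝ :=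
  ‖(-(1 / 4) : ℂ) * (-I * ((Int.sign k : ℤ) : ℂ) * v + ((|(k : ℝ)| : ℝ) : ℂ) * u)‖ ^ 2
    + ‖(-(1 / 4) : ℂ) * (I * ((Int.sign k : ℤ) : ℂ) * u + ((|(k : ℝ)| : ℝ) : ℂ) * v)‖ ^ 2

lemma Int.sign_sq_of_ne_zero {k : ℤ} (hk : k ≠ 0) : k.sign ^ 2 = 1 :=
  Int.isUnit_sq (Int.isUnit_iff_natAbs_eq.mpr (Int.natAbs_sign_of_ne_zero hk))

lemma two_mul_abs_re_mul_im_sub_im_mul_re_le (u v : ℂ) :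
    2 * |u.re * v.im - u.im * v.re| ≤ ‖u‖ ^ 2 + ‖v‖ ^ 2 := by
  rw [Complex.sq_norm, Complex.sq_norm, Complex.normSq_apply, Complex.normSq_apply,
    ← le_div_iff₀' two_pos, abs_le]
  constructor <;> nlinarith [sq_nonneg (u.re - v.im), sq_nonneg (u.re + v.im),
    sq_nonneg (u.im - v.re), sq_nonneg (u.im + v.re)]

namespace modeNormSq

theorem sixteen_mul_eq (k : ℤ) (u v : ℂ) :
    16 * modeNormSq k u v = ((k : ℝ) ^ 2 + (Int.sign k : ℝ) ^ 2) * (‖u‖ ^ 2 + ‖v‖ ^ 2)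
      + 4 * k * (u.re * v.im - u.im * v.re) := by
  have hsign : (Int.sign k : ℝ) * |(k : ℝ)| = k := by exact_mod_cast Int.sign_mul_abs k
  have hquarter : ‖(-(1 / 4) : ℂ)‖ ^ 2 = 1 / 16 := by norm_num
  simp only [modeNormSq, norm_mul, mul_pow, hquarter, Complex.sq_norm, Complex.normSq_apply,
    mul_re, mul_im, add_re, add_im, neg_re, neg_im, I_re, I_im, ofReal_re, ofReal_im,
    intCast_re, intCast_im]
  linear_combination 4 * (u.re * v.im - u.im * v.re) * hsign
    + (u.re ^ 2 + u.im ^ 2 + v.re ^ 2 + v.im ^ 2) * sq_abs (k : ℝ)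

theorem nonneg (k : ℤ) (u v : ℂ) : 0 ≤ modeNormSq k u v := by
  unfold modeNormSq; positivity

theorem conj_neg (k : ℤ) (u v : ℂ) :
    modeNormSq (-k) (starRingEnd ℂ u) (starRingEnd ℂ v) = modeNormSq k u v := by
  refine mul_left_cancel₀ (by norm_num : (16 : ℝ) ≠ 0) ?_
  rw [sixteen_mul_eq, sixteen_mul_eq]
  simp only [Int.sign_neg, RCLike.norm_conj, conj_re, conj_im, Int.cast_neg]
  ring

theorem abs_cross_term_le (k : ℤ) (u v : ℂ) :
    |4 * k * (u.re * v.im - u.im * v.re)| ≤ 2 * |(k : ℝ)| * (‖u‖ ^ 2 + ‖v‖ ^ 2) := by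
  rw [abs_mul, abs_mul, abs_of_pos four_pos]
  nlinarith [two_mul_abs_re_mul_im_sub_im_mul_re_le u v, abs_nonneg (k : ℝ)]

theorem le_mul_sq (k : ℤ) (u v : ℂ) :
    modeNormSq k u v ≤ 1 / 4 * ((k : ℝ) ^ 2 * (‖u‖ ^ 2 + ‖v‖ ^ 2)) := by
  rcases eq_or_ne k 0 with rfl | hk
  · simp [modeNormSq]
  have h16 := sixteen_mul_eq k u v
  have hcross := (abs_le.mp (abs_cross_term_le k u v)).2
  have hsign : (Int.sign k : ℝ) ^ 2 = 1 := by exact_mod_cast Int.sign_sq_of_ne_zero hk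
  have hk1 : 1 ≤ |(k : ℝ)| := by exact_mod_cast Int.one_le_abs hk
  nlinarith [sq_abs (k : ℝ), mul_nonneg (mul_nonneg (sub_nonneg.mpr hk1) (abs_nonneg (k : ℝ)))
    (by positivity : (0 : ℝ) ≤ ‖u‖ ^ 2 + ‖v‖ ^ 2)]

theorem mul_sq_le_of_ne_one_of_ne_neg_one (k : ℤ) (hk : k ≠ 1) (hk' : k ≠ -1) (u v : ℂ) :
    1 / 64 * ((k : ℝ) ^ 2 * (‖u‖ ^ 2 + ‖v‖ ^ 2)) ≤ modeNormSq k u v := by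
  rcases eq_or_ne k 0 with rfl | hk0
  · simpa using nonneg 0 u v
  have h16 := sixteen_mul_eq k u v
  have hcross := (abs_le.mp (abs_cross_term_le k u v)).1
  have hsign : (Int.sign k : ℝ) ^ 2 = 1 := by exact_mod_cast Int.sign_sq_of_ne_zero hk0
  have hk2 : 2 ≤ |(k : ℝ)| := by
    have : 2 ≤ |k| := le_abs'.mpr (by omega)
    exact_mod_cast this
  -- `16 * modeNormSq k u v ≥ (|k| - 1)² (‖u‖² + ‖v‖²)` and
  -- `(|k| - 1)² - k² / 4 = (|k| - 2) (3 |k| - 2) / 4`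
  nlinarith [sq_abs (k : ℝ), mul_nonneg (mul_nonneg (sub_nonneg.mpr hk2)
    (by linarith : (0 : ℝ) ≤ 3 * |(k : ℝ)| - 2)) (by positivity : (0 : ℝ) ≤ ‖u‖ ^ 2 + ‖v‖ ^ 2)]

theorem mul_le_one_add_sq (u v : ℂ) (h : u.im + v.re = 0) :
    1 / 64 * (‖u‖ ^ 2 + ‖v‖ ^ 2) ≤ modeNormSq 1 u v + (u.re - v.im) ^ 2 / 128 := by
  have h16 := sixteen_mul_eq 1 u v
  simp only [Int.cast_one, Int.sign_one, one_pow, Complex.sq_norm, Complex.normSq_apply] at h16 ⊢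
  -- under `h`, `16 * modeNormSq 1 u v = 2 (u.re + v.im)² + 8 u.im²`
  nlinarith [sq_nonneg (u.re + v.im)]

end modeNormSq

noncomputable def unitModesDefect (δ : ℝ) : ℤ → ℝ :=
  Pi.single (1 : ℤ) (δ ^ 2 / 128 : ℝ) + Pi.single (-1 : ℤ) (δ ^ 2 / 128 : ℝ)

theorem hasSum_unitModesDefect (δ : ℝ) : HasSum (unitModesDefect δ) (δ ^ 2 / 64) := by
  rw [show δ ^ 2 / 64 = δ ^ 2 / 128 + δ ^ 2 / 128 by ring]
  exact (hasSum_pi_single _ _).add (hasSum_pi_single _ _)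

theorem mul_sq_le_modeNormSq_add_unitModesDefect (a b : ℤ → ℂ) (δ : ℝ)
    (ha : a (-1) = starRingEnd ℂ (a 1)) (hb : b (-1) = starRingEnd ℂ (b 1))
    (h1 : (a 1).im + (b 1).re = 0) (h2 : |(a 1).re - (b 1).im| ≤ δ) (k : ℤ) :
    1 / 64 * ((k : ℝ) ^ 2 * (‖a k‖ ^ 2 + ‖b k‖ ^ 2)) ≤
      modeNormSq k (a k) (b k) + unitModesDefect δ k := by
  have hmode_one := modeNormSq.mul_le_one_add_sq (a 1) (b 1) h1
  have hdefect : ((a 1).re - (b 1).im) ^ 2 ≤ δ ^ 2 :=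
    sq_le_sq' (neg_le_of_abs_le h2) (le_of_abs_le h2)
  rcases eq_or_ne k 1 with rfl | hk1
  · simp only [unitModesDefect, Pi.add_apply, Pi.single_apply, Int.cast_one]
    norm_num
    linarith
  rcases eq_or_ne k (-1) with rfl | hk1'
  · rw [ha, hb, modeNormSq.conj_neg, RCLike.norm_conj, RCLike.norm_conj]
    simp only [unitModesDefect, Pi.add_apply, Pi.single_apply]
    norm_num
    linarith
  simpa [unitModesDefect, Pi.single_apply, hk1, hk1'] using
    modeNormSq.mul_sq_le_of_ne_one_of_ne_neg_one k hk1 hk1' (a k) (b k)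

/-- Coercivity of the linearized Stokes boundary-velocity operator
T D = -(1/4)J(ℋD) - (1/4)ℋD' near the unit circle, stated on the Fourier side:
a k, b k are the Fourier coefficients of the two components of D, satisfying the
reality condition, the optimality constraint Im a₁ + Re b₁ = 0 and the
near-area-conservation constraint |Re a₁ - Im b₁| ≤ δ.  Then
‖TD‖²_{L²} ≥ (1/64)‖D'‖²_{L²} - Cδ². -/
theorem linearized_operator_coercive :
    ∃ C : ℝ, 0 < C ∧
      ∀ (a b : ℤ → ℂ) (δ : ℝ), 0 ≤ δ →
        (∀ k : ℤ, a (-k) = starRingEnd ℂ (a k)) →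
        (∀ k : ℤ, b (-k) = starRingEnd ℂ (b k)) →
        Summable (fun k : ℤ => (k : ℝ) ^ 2 * (‖a k‖ ^ 2 + ‖b k‖ ^ 2)) →
        (a 1).im + (b 1).re = 0 →
        |(a 1).re - (b 1).im| ≤ δ →
        (1 / 64) * (2 * Real.pi * ∑' k : ℤ, (k : ℝ) ^ 2 * (‖a k‖ ^ 2 + ‖b k‖ ^ 2))
            - C * δ ^ 2
          ≤ 2 * Real.pi * ∑' k : ℤ,
              (‖(-(1 / 4) : ℂ) * (-Complex.I * ((Int.sign k : ℤ) : ℂ) * b k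
                  + ((|(k : ℝ)| : ℝ) : ℂ) * a k)‖ ^ 2
                + ‖(-(1 / 4) : ℂ) * (Complex.I * ((Int.sign k : ℤ) : ℂ) * a k
                  + ((|(k : ℝ)| : ℝ) : ℂ) * b k)‖ ^ 2) := by
  refine ⟨1, one_pos, fun a b δ _ ha hb hsum h1 h2 => ?_⟩
  change _ ≤ 2 * Real.pi * ∑' k : ℤ, modeNormSq k (a k) (b k)
  have hT : Summable fun k : ℤ => modeNormSq k (a k) (b k) :=
    .of_nonneg_of_le (fun k => modeNormSq.nonneg k _ _) (fun k => modeNormSq.le_mul_sq k _ _)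
      (hsum.mul_left _)
  have hsummed := hasSum_le (mul_sq_le_modeNormSq_add_unitModesDefect a b δ (ha 1) (hb 1) h1 h2)
    (hsum.hasSum.mul_left (1 / 64))
    (hT.hasSum.add (hasSum_unitModesDefect δ))
  nlinarith [Real.pi_pos, Real.pi_le_four, sq_nonneg δ]
end
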